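/- arXiv:0706.3815 — 9 statements merged into one kernel-verified Lean document; each statement's English description precedes it below -/
import Mathlib

section
/- If X is a completely regular topological space and T is the family of all cozero sets of X, then T = T_seq. -/
open Set Topology

/-- The equivalence relation identifying points lying in exactly the same members of `P`. -/
def pSetoid {X : Type*} (P : Set (Set X)) : Setoid X where
  r x y := ∀ V ∈ P, x ∈ V ↔ y ∈ V
  iseqv := ⟨fun _ _ _ => Iff.rfl, fun h V hV => (h V hV).symm,
    fun h1 h2 V hV => (h1 V hV).trans (h2 V hV)⟩

/-- The quotient `X/P`. -/
def pQuot {X : Type*} (P : Set (Set X)) : Type _ := Quotient (pSetoid P)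

/-- The `Q_P`-map `q : X → X/P`. -/
def pMap {X : Type*} (P : Set (Set X)) : X → pQuot P := Quotient.mk (pSetoid P)

/-- The `Q_P`-topology on `X/P`, generated by the images `q[V]`, `V ∈ P`. -/
def pTop {X : Type*} (P : Set (Set X)) : TopologicalSpace (pQuot P) :=
  TopologicalSpace.generateFrom {S | ∃ V ∈ P, S = pMap P '' V}

/-- `R_seq`: sets `W` that are unions `⋃ₙ Uₙ` with `Uₖ ⊆ X \ Vₖ ⊆ Uₖ₊₁`, `Uₙ, Vₙ ∈ R`. -/
def seqFam {X : Type*} (R : Set (Set X)) : Set (Set X) :=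
  {W | ∃ U V : ℕ → Set X, (∀ n, U n ∈ R) ∧ (∀ n, V n ∈ R) ∧
    (∀ k, U k ⊆ (V k)ᶜ ∧ (V k)ᶜ ⊆ U (k + 1)) ∧ (⋃ n, U n) = W}

/-- The family of cozero sets of `X`. -/
def cozeroFam (X : Type*) [TopologicalSpace X] : Set (Set X) :=
  {W | ∃ f : X → ℝ, Continuous f ∧ (∀ x, f x ∈ Set.Icc (0 : ℝ) 1) ∧ W = f ⁻¹' Set.Ioc 0 1}

/-- A skeletal map: a continuous surjection such that the closure of the image of every
nonempty open set has nonempty interior. -/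
def IsSkeletal {X Y : Type*} [TopologicalSpace X] [TopologicalSpace Y] (f : X → Y) : Prop :=
  Continuous f ∧ Function.Surjective f ∧
    ∀ U : Set X, IsOpen U → U.Nonempty → (interior (closure (f '' U))).Nonempty

/-- A skeletal family of open subsets of `X`. -/
def SkeletalFamily {X : Type*} [TopologicalSpace X] (P : Set (Set X)) : Prop :=
  ∀ V : Set X, IsOpen V → V.Nonempty →
    ∃ W ∈ P, ∀ U ∈ P, U ⊆ W → U.Nonempty → (U ∩ V).Nonempty

/-- A π-base: a family of nonempty open sets such that every nonempty open set contains
a member of the family. -/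
def IsPiBase {Y : Type*} [TopologicalSpace Y] (B : Set (Set Y)) : Prop :=
  (∀ b ∈ B, IsOpen b ∧ b.Nonempty) ∧ ∀ U : Set Y, IsOpen U → U.Nonempty → ∃ b ∈ B, b ⊆ U

/-- A strategy for Player I in the open-open game produces nonempty open sets. -/
def ValidStrategy {X : Type*} [TopologicalSpace X] (σ : List (Set X) → Set X) : Prop :=
  ∀ l : List (Set X), IsOpen (σ l) ∧ (σ l).Nonempty

/-- `B` is a play of Player II against the strategy `σ` of Player I: each `B n` is a
nonempty open subset of the set produced by `σ` from the previous moves of Player II. -/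
def IsPlayAgainst {X : Type*} [TopologicalSpace X] (σ : List (Set X) → Set X)
    (B : ℕ → Set X) : Prop :=
  ∀ n, IsOpen (B n) ∧ (B n).Nonempty ∧ B n ⊆ σ (List.ofFn (fun i : Fin n => B i))

/-- A winning strategy for Player I in the open-open game: every play of Player II against
it has dense union. -/
def WinningStrategy {X : Type*} [TopologicalSpace X] (σ : List (Set X) → Set X) : Prop :=
  ValidStrategy σ ∧ ∀ B : ℕ → Set X, IsPlayAgainst σ B → Dense (⋃ n, B n)

/-- A space is I-favorable if Player I has a winning strategy in the open-open game. -/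
def IFavorable (X : Type*) [TopologicalSpace X] : Prop :=
  ∃ σ : List (Set X) → Set X, WinningStrategy σ

/-- `P` is closed under the strategy `σ`. -/
def ClosedUnderStrategy {X : Type*} [TopologicalSpace X] (P : Set (Set X))
    (σ : List (Set X) → Set X) : Prop :=
  σ [] ∈ P ∧ ∀ l : List (Set X), (∀ b ∈ l, b ∈ P) → σ l ∈ P

/-- The limit of an inverse system, as the subspace of threads in the product. -/
abbrev invLimit {ι : Type*} [Preorder ι] (Y : ι → Type*)
    (bond : ∀ i j : ι, i ≤ j → Y j → Y i) : Type _ :=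
  {u : ∀ i, Y i // ∀ (i j : ι) (h : i ≤ j), bond i j h (u j) = u i}

/-- The topology of the inverse limit, with explicitly given topologies on factors. -/
def invLimitTop {ι : Type*} [Preorder ι] (Y : ι → Type*) (t : ∀ i, TopologicalSpace (Y i))
    (bond : ∀ i j : ι, i ≤ j → Y j → Y i) : TopologicalSpace (invLimit Y bond) :=
  @instTopologicalSpaceSubtype _ _ (@Pi.topologicalSpace ι Y t)

/-- σ-completeness of an inverse system: each countable chain of indices has a least upper
bound `l`, and the canonical map from `Y l` to the limit of the countable subsystem is a
homeomorphism (an embedding whose range is the set of threads). -/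
def SigmaComplete {ι : Type*} [Preorder ι] (Y : ι → Type*) (t : ∀ i, TopologicalSpace (Y i))
    (bond : ∀ i j : ι, i ≤ j → Y j → Y i) : Prop :=
  (∀ s : ℕ → ι, Monotone s → ∃ l, IsLUB (Set.range s) l) ∧
  ∀ (s : ℕ → ι) (hs : Monotone s) (l : ι) (hl : IsLUB (Set.range s) l),
    @IsEmbedding (Y l) (∀ n, Y (s n)) (t l) (@Pi.topologicalSpace ℕ _ (fun n => t (s n)))
      (fun x n => bond (s n) l (hl.1 (Set.mem_range_self n)) x) ∧
    Set.range (fun (x : Y l) (n : ℕ) => bond (s n) l (hl.1 (Set.mem_range_self n)) x) =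
      {u : ∀ n, Y (s n) | ∀ (n m : ℕ) (h : n ≤ m), bond (s n) (s m) (hs h) (u m) = u n}

/-- A σ-complete inverse system of topological spaces over a directed partial order,
with continuous surjective bonding maps. -/
structure TopInvSystem : Type 1 where
  ι : Type
  [ord : PartialOrder ι]
  directed : IsDirected ι (· ≤ ·)
  Y : ι → Type
  [t : ∀ i, TopologicalSpace (Y i)]
  bond : ∀ i j : ι, i ≤ j → Y j → Y i
  bond_refl : ∀ i (x : Y i), bond i i le_rfl x = x
  bond_comp : ∀ (i j k : ι) (hij : i ≤ j) (hjk : j ≤ k) (x : Y k),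
    bond i j hij (bond j k hjk x) = bond i k (hij.trans hjk) x
  bond_cont : ∀ (i j : ι) (h : i ≤ j), Continuous (bond i j h)
  bond_surj : ∀ (i j : ι) (h : i ≤ j), Function.Surjective (bond i j h)
  sigmaComplete : SigmaComplete Y t bond

instance (S : TopInvSystem) : PartialOrder S.ι := S.ord
instance (S : TopInvSystem) (i : S.ι) : TopologicalSpace (S.Y i) := S.t i

/-- The limit of a `TopInvSystem`. -/
def TopInvSystem.Limit (S : TopInvSystem) : Type := invLimit S.Y S.bond

instance (S : TopInvSystem) : TopologicalSpace S.Limit :=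
  inferInstanceAs (TopologicalSpace (invLimit S.Y S.bond))

/-- The bonding map `X/R → X/P` for `P ⊆ R`, sending `[x]_R` to `[x]_P`. -/
def pBond {X : Type*} (P R : Set (Set X)) (h : P ⊆ R) : pQuot R → pQuot P :=
  Quotient.lift (pMap P) (fun _ _ hab => Quotient.sound (fun V hV => hab V (h hV)))

/-- A `T`-club on a space `X` (with `T` the cozero sets): a collection of countable
subfamilies of `T`, each closed under a fixed winning strategy for Player I, closed under
finite unions and intersections, contained in its `seq`-family, which is cofinal among
countable subfamilies of `T` and closed under countable chains. -/
def TClub {X : Type*} [TopologicalSpace X] (C : Set (Set (Set X))) : Prop :=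
  ∃ σ : List (Set X) → Set X, WinningStrategy σ ∧
    (∀ P ∈ C, P.Countable ∧ P ⊆ cozeroFam X ∧ ClosedUnderStrategy P σ ∧
      (∀ A ∈ P, ∀ B ∈ P, A ∪ B ∈ P ∧ A ∩ B ∈ P) ∧ P ⊆ seqFam P) ∧
    (∀ Q : Set (Set X), Q.Countable → Q ⊆ cozeroFam X → ∃ P ∈ C, Q ⊆ P) ∧
    (∀ f : ℕ → Set (Set X), (∀ n, f n ∈ C) → Monotone f → (⋃ n, f n) ∈ C)


lemma cozero_of_nonneg {X : Type*} [TopologicalSpace X] (g : X → ℝ) (hg : Continuous g)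
    (h0 : ∀ x, 0 ≤ g x) : {x | 0 < g x} ∈ cozeroFam X := by
  refine ⟨fun x => min (g x) 1, hg.min continuous_const,
    fun x => ⟨le_min (h0 x) zero_le_one, min_le_right _ _⟩, ?_⟩
  ext x
  simp only [Set.mem_setOf_eq, Set.mem_preimage, Set.mem_Ioc, lt_min_iff, zero_lt_one,
    and_true, min_le_right]

theorem stmt3 {X : Type*} [TopologicalSpace X] [CompletelyRegularSpace X] :
    cozeroFam X = seqFam (cozeroFam X) := by
  have key : ∀ (f : X → ℝ), Continuous f → (∀ x, 0 ≤ f x) → ∀ a : ℝ,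
      {x | a < f x} ∈ cozeroFam X ∧ {x | f x < a} ∈ cozeroFam X := by
    intro f hf h0 a
    constructor
    · have : {x | a < f x} = {x | 0 < max 0 (f x - a)} := by
        ext x; simp [lt_max_iff, sub_pos]
      rw [this]
      exact cozero_of_nonneg _ (continuous_const.max (hf.sub continuous_const))
        (fun x => le_max_left _ _)
    · have : {x | f x < a} = {x | 0 < max 0 (a - f x)} := by
        ext x; simp [lt_max_iff, sub_pos]
      rw [this]
      exact cozero_of_nonneg _ (continuous_const.max (continuous_const.sub hf))
        (fun x => le_max_left _ _)
  apply Set.Subset.antisymm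
  · rintro W ⟨f, hf, hf01, rfl⟩
    have h0 : ∀ x, 0 ≤ f x := fun x => (hf01 x).1
    set a : ℕ → ℝ := fun n => 1 / (n + 2) with ha
    have hapos : ∀ n, 0 < a n := by
      intro n; apply div_pos one_pos; positivity
    have hamono : ∀ n, a (n + 1) < a n := by
      intro n
      apply one_div_lt_one_div_of_lt
      · positivity
      · push_cast; linarith
    refine ⟨fun n => {x | a n < f x}, fun n => {x | f x < a n},
      fun n => (key f hf h0 (a n)).1, fun n => (key f hf h0 (a n)).2, ?_, ?_⟩
    · intro k
      constructor
      · intro x hx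
        simp only [Set.mem_compl_iff, Set.mem_setOf_eq, not_lt]
        exact (hx : a k < f x).le
      · intro x hx
        simp only [Set.mem_compl_iff, Set.mem_setOf_eq, not_lt] at hx
        exact lt_of_lt_of_le (hamono k) hx
    · ext x
      simp only [Set.mem_iUnion, Set.mem_setOf_eq, Set.mem_preimage, Set.mem_Ioc]
      constructor
      · rintro ⟨n, hn⟩
        exact ⟨lt_of_le_of_lt (hapos n).le hn, (hf01 x).2⟩
      · rintro ⟨hpos, -⟩
        obtain ⟨n, hn⟩ := exists_nat_one_div_lt hpos
        refine ⟨n, lt_of_le_of_lt ?_ hn⟩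
        apply one_div_le_one_div_of_le
        · positivity
        · push_cast; linarith
  · rintro W ⟨U, V, hU, hV, -, rfl⟩
    choose f hfc hf01 hUf using hU
    have habs : ∀ n x, ‖(1 / 2 : ℝ) ^ (n + 1) * f n x‖ ≤ (1 / 2) ^ (n + 1) := by
      intro n x
      rw [norm_mul, norm_pow]
      have h1 : ‖(1 / 2 : ℝ)‖ = 1 / 2 := by rw [Real.norm_eq_abs]; norm_num
      rw [h1]
      have h2 : ‖f n x‖ ≤ 1 := by
        rw [Real.norm_eq_abs, abs_le]
        exact ⟨by linarith [((hf01 n) x).1], ((hf01 n) x).2⟩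
      calc (1 / 2 : ℝ) ^ (n + 1) * ‖f n x‖ ≤ (1 / 2) ^ (n + 1) * 1 := by
            apply mul_le_mul_of_nonneg_left h2; positivity
        _ = (1 / 2) ^ (n + 1) := mul_one _
    have hsum : Summable (fun n : ℕ => (1 / 2 : ℝ) ^ (n + 1)) := by
      exact (summable_geometric_two.mul_right (1 / 2)).congr
        fun n => (pow_succ (1 / 2 : ℝ) n).symm
    set F : X → ℝ := fun x => ∑' n, (1 / 2 : ℝ) ^ (n + 1) * f n x with hF
    have hFc : Continuous F :=
      continuous_tsum (fun n => continuous_const.mul (hfc n)) hsum habs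
    have hterm_nonneg : ∀ n x, 0 ≤ (1 / 2 : ℝ) ^ (n + 1) * f n x := by
      intro n x
      apply mul_nonneg (by positivity) ((hf01 n x).1)
    have hsumx : ∀ x, Summable (fun n : ℕ => (1 / 2 : ℝ) ^ (n + 1) * f n x) := by
      intro x
      apply Summable.of_nonneg_of_le (fun n => hterm_nonneg n x) _ hsum
      intro n
      calc (1 / 2 : ℝ) ^ (n + 1) * f n x ≤ (1 / 2) ^ (n + 1) * 1 := by
            apply mul_le_mul_of_nonneg_left ((hf01 n x).2); positivity
        _ = (1 / 2) ^ (n + 1) := mul_one _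
    have hF0 : ∀ x, 0 ≤ F x := fun x => tsum_nonneg (fun n => hterm_nonneg n x)
    have hset : (⋃ n, U n) = {x | 0 < F x} := by
      ext x
      simp only [Set.mem_iUnion, Set.mem_setOf_eq]
      constructor
      · rintro ⟨n, hn⟩
        rw [hUf n] at hn
        have hfn : 0 < f n x := hn.1
        have : (1 / 2 : ℝ) ^ (n + 1) * f n x ≤ F x :=
          Summable.le_tsum (hsumx x) n (fun m _ => hterm_nonneg m x)
        have hpos : 0 < (1 / 2 : ℝ) ^ (n + 1) * f n x := by positivity
        linarith
      · intro hFx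
        by_contra h
        push_neg at h
        have hall : ∀ n, f n x = 0 := by
          intro n
          have hnx : x ∉ U n := h n
          rw [hUf n] at hnx
          simp only [Set.mem_preimage, Set.mem_Ioc, not_and, not_le] at hnx
          rcases lt_or_eq_of_le ((hf01 n x).1) with hlt | heq
          · exact absurd (hnx hlt) (not_lt.mpr (hf01 n x).2)
          · exact heq.symm
        have : F x = 0 := by
          rw [hF]
          convert tsum_zero with n
          rw [hall n, mul_zero]
        linarith
    rw [hset]
    exact cozero_of_nonneg F hFc hF0
end

section
/- If R is a ring of subsets of X (closed under finite unions and finite intersections) with R ⊆ R_seq, then any countable union ⋃_{n∈ω} U_n of members U_n ∈ R belongs to R_seq. -/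
open Set Topology

private lemma aux_biUnion_mem {X : Type*} {R : Set (Set X)}
    (hring : ∀ A ∈ R, ∀ B ∈ R, A ∪ B ∈ R ∧ A ∩ B ∈ R) (F : ℕ → Set X)
    (hF : ∀ n, F n ∈ R) : ∀ m, (⋃ n ∈ Finset.range (m + 1), F n) ∈ R := by
  intro m
  induction m with
  | zero => simpa using hF 0
  | succ m ih =>
    rw [Finset.range_add_one, Finset.set_biUnion_insert]
    exact (hring _ (hF _) _ ih).1

private lemma aux_biInter_mem {X : Type*} {R : Set (Set X)}
    (hring : ∀ A ∈ R, ∀ B ∈ R, A ∪ B ∈ R ∧ A ∩ B ∈ R) (F : ℕ → Set X)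
    (hF : ∀ n, F n ∈ R) : ∀ m, (⋂ n ∈ Finset.range (m + 1), F n) ∈ R := by
  intro m
  induction m with
  | zero => simpa using hF 0
  | succ m ih =>
    rw [Finset.range_add_one, Finset.set_biInter_insert]
    exact (hring _ (hF _) _ ih).2

theorem stmt4 {X : Type*} (R : Set (Set X))
    (hring : ∀ A ∈ R, ∀ B ∈ R, A ∪ B ∈ R ∧ A ∩ B ∈ R)
    (hseq : R ⊆ seqFam R) (U : ℕ → Set X) (hU : ∀ n, U n ∈ R) :
    (⋃ n, U n) ∈ seqFam R := by
  choose u v hu hv hchain huU using fun n => hseq (hU n)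
  have humono : ∀ n, Monotone (u n) := fun n =>
    monotone_nat_of_le_succ fun k =>
      ((hchain n k).1.trans (hchain n k).2)
  refine ⟨fun m => ⋃ n ∈ Finset.range (m + 1), u n m,
    fun m => ⋂ n ∈ Finset.range (m + 1), v n m,
    fun m => aux_biUnion_mem hring _ (fun n => hu n m) m,
    fun m => aux_biInter_mem hring _ (fun n => hv n m) m, ?_, ?_⟩
  · intro k
    constructor
    · intro x hx hxB
      simp only [Set.mem_iUnion] at hx
      obtain ⟨n, hn, hxn⟩ := hx
      have := (hchain n k).1 hxn
      exact this (Set.mem_iInter₂.1 hxB n hn)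
    · intro x hx
      simp only [Set.mem_compl_iff, Set.mem_iInter, not_forall] at hx
      obtain ⟨n, hn, hxn⟩ := hx
      have : x ∈ u n (k + 1) := (hchain n k).2 hxn
      exact Set.mem_iUnion₂.2 ⟨n, Finset.mem_range.2
        (Nat.lt_succ_of_lt (Finset.mem_range.1 hn)), this⟩
  · ext x
    simp only [Set.mem_iUnion]
    constructor
    · rintro ⟨m, hm⟩
      obtain ⟨n, _, hxn⟩ := hm
      exact ⟨n, (huU n) ▸ Set.mem_iUnion.2 ⟨m, hxn⟩⟩
    · rintro ⟨n, hx⟩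
      rw [← huU n] at hx
      obtain ⟨k, hk⟩ := Set.mem_iUnion.1 hx
      exact ⟨max n k, n, Finset.mem_range.2
        (Nat.lt_succ_of_le (le_max_left _ _)), humono n (le_max_right _ _) hk⟩
end

section
/- Let P be a family of subsets of X with P ⊆ P_seq. Then the Q_P-topology on X/P is Hausdorff. -/
open Set Topology

lemma pMap_mem_image_iff {X : Type*} {P : Set (Set X)} {W : Set X} (hW : W ∈ P) (z : X) :
    pMap P z ∈ pMap P '' W ↔ z ∈ W := by
  constructor
  · rintro ⟨z', hz', heq⟩
    exact (Quotient.exact heq W hW).mp hz'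
  · exact fun h => ⟨z, h, rfl⟩

lemma sep_aux {X : Type*} {P : Set (Set X)} (hseq : P ⊆ seqFam P) {x y : X} {V : Set X}
    (hV : V ∈ P) (hx : x ∈ V) (hy : y ∉ V) :
    ∃ s t : Set (pQuot P), IsOpen[pTop P] s ∧ IsOpen[pTop P] t ∧
      pMap P x ∈ s ∧ pMap P y ∈ t ∧ Disjoint s t := by
  obtain ⟨U, Vs, hU, hVs, hchain, hUnion⟩ := hseq hV
  rw [← hUnion] at hx hy
  obtain ⟨n, hxn⟩ := Set.mem_iUnion.mp hx
  have hyv : y ∈ Vs n := by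
    by_contra h
    exact hy (Set.mem_iUnion.mpr ⟨n + 1, (hchain n).2 h⟩)
  refine ⟨pMap P '' U n, pMap P '' Vs n, ?_, ?_, ⟨x, hxn, rfl⟩, ⟨y, hyv, rfl⟩, ?_⟩
  · exact TopologicalSpace.GenerateOpen.basic _ ⟨U n, hU n, rfl⟩
  · exact TopologicalSpace.GenerateOpen.basic _ ⟨Vs n, hVs n, rfl⟩
  · rw [Set.disjoint_left]
    intro c hcs hct
    induction c using Quotient.ind with | _ z =>
    exact (hchain n).1 ((pMap_mem_image_iff (hU n) z).mp hcs)
      ((pMap_mem_image_iff (hVs n) z).mp hct)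

theorem stmt5 {X : Type*} (P : Set (Set X)) (hseq : P ⊆ seqFam P) :
    @T2Space (pQuot P) (pTop P) := by
  letI := pTop P
  constructor
  intro a b hab
  induction a using Quotient.ind with | _ x =>
  induction b using Quotient.ind with | _ y =>
  have hne : ¬ (∀ V ∈ P, x ∈ V ↔ y ∈ V) := fun h => hab (Quotient.sound h)
  push_neg at hne
  obtain ⟨V, hV, hxy⟩ := hne
  rcases hxy with ⟨hx, hy⟩ | ⟨hx, hy⟩
  · obtain ⟨s, t, hs, ht, hxs, hyt, hd⟩ := sep_aux hseq hV hx hy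
    exact ⟨s, t, hs, ht, hxs, hyt, hd⟩
  · obtain ⟨s, t, hs, ht, hys, hxt, hd⟩ := sep_aux hseq hV hy hx
    exact ⟨t, s, ht, hs, hxt, hys, hd.symm⟩
end

section
/- Frink's theorem: A T1 topological space X is completely regular if and only if it has a base B satisfying: (1) if x ∈ U ∈ B then there exists V ∈ B with x ∉ V and U ∪ V = X; (2) if U, V ∈ B and U ∪ V = X, then there exist disjoint M, N ∈ B with X \ U ⊆ M and X \ V ⊆ N. -/
open Set Topology

/-!
Cozero sets of a completely regular space form such a base: a point of an open set is
separated from its complement by a function, and two cozero sets `{0 < f}`, `{0 < g}` covering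
`X` yield the disjoint cozero sets `{f < g}` and `{g < f}`.

Conversely, condition (2) is exactly the halving step of Urysohn's construction, carried out
inside `B`: if `a, b ∈ B` cover `X`, it gives `M, N ∈ B` with `aᶜ ⊆ M`, `bᶜ ⊆ N` and
`closure M ⊆ Nᶜ ⊆ b`, and the two halves `(aᶜ, M)` and `(closure M, b)` are again separated by
covering pairs `(a, M)` and `(N, b)` of basic sets. So Urysohn's function exists for every
covering pair `U, V ∈ B`, and the base property with condition (1) supplies such a pair
separating a point from a closed set.
-/

open TopologicalSpace unitInterval

section Cozero

variable {X : Type*} [TopologicalSpace X]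

theorem mem_cozeroFam_iff {s : Set X} :
    s ∈ cozeroFam X ↔ ∃ f : X → ℝ, Continuous f ∧ s = {x | 0 < f x} := by
  constructor
  · rintro ⟨f, hf, hf01, rfl⟩
    refine ⟨f, hf, ?_⟩
    ext x
    simp [(hf01 x).2]
  · rintro ⟨f, hf, rfl⟩
    refine ⟨fun x => min (max (f x) 0) 1, by fun_prop,
      fun x => ⟨le_min (le_max_right _ _) zero_le_one, min_le_right _ _⟩, ?_⟩
    ext x
    simp

theorem isOpen_of_mem_cozeroFam {s : Set X} (hs : s ∈ cozeroFam X) : IsOpen s := by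
  obtain ⟨f, hf, rfl⟩ := mem_cozeroFam_iff.1 hs
  exact isOpen_lt continuous_const hf

theorem setOf_lt_mem_cozeroFam {f g : X → ℝ} (hf : Continuous f) (hg : Continuous g) :
    {x | f x < g x} ∈ cozeroFam X :=
  mem_cozeroFam_iff.2 ⟨fun x => g x - f x, hg.sub hf, by simp only [sub_pos]⟩

theorem exists_disjoint_cozeroFam_of_union_eq_univ {U V : Set X} (hU : U ∈ cozeroFam X)
    (hV : V ∈ cozeroFam X) (hUV : U ∪ V = univ) :
    ∃ M ∈ cozeroFam X, ∃ N ∈ cozeroFam X, M ∩ N = ∅ ∧ Uᶜ ⊆ M ∧ Vᶜ ⊆ N := by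
  obtain ⟨f, hf, rfl⟩ := mem_cozeroFam_iff.1 hU
  obtain ⟨g, hg, rfl⟩ := mem_cozeroFam_iff.1 hV
  have hcover : ∀ x, 0 < f x ∨ 0 < g x := fun x => by simpa using hUV.ge (mem_univ x)
  refine ⟨_, setOf_lt_mem_cozeroFam hf hg, _, setOf_lt_mem_cozeroFam hg hf, ?_, ?_, ?_⟩
  · ext x
    simpa using fun h => h.le
  · intro x hx
    simp only [mem_compl_iff, mem_ofPred_eq, not_lt] at hx ⊢
    exact hx.trans_lt ((hcover x).resolve_left hx.not_gt)
  · intro x hx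
    simp only [mem_compl_iff, mem_ofPred_eq, not_lt] at hx ⊢
    exact hx.trans_lt ((hcover x).resolve_right hx.not_gt)

variable [CompletelyRegularSpace X]

theorem isTopologicalBasis_cozeroFam : IsTopologicalBasis (cozeroFam X) := by
  refine isTopologicalBasis_of_isOpen_of_nhds (fun _ => isOpen_of_mem_cozeroFam)
    fun x W hxW hW => ?_
  obtain ⟨g, hg, hgx, hg1⟩ := completelyRegularSpace_iff_isOpen.1 ‹_› x W hW hxW
  refine ⟨{y | (g y : ℝ) < 1}, setOf_lt_mem_cozeroFam (continuous_subtype_val.comp hg)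
    continuous_const, by simp [hgx], fun y hy => ?_⟩
  by_contra hyW
  simp [hg1 hyW] at hy

theorem exists_cozeroFam_notMem_union_eq_univ {U : Set X} (hU : IsOpen U) {x : X}
    (hx : x ∈ U) : ∃ V ∈ cozeroFam X, x ∉ V ∧ U ∪ V = univ := by
  obtain ⟨g, hg, hgx, hg1⟩ := completelyRegularSpace_iff_isOpen.1 ‹_› x U hU hx
  refine ⟨{y | 0 < (g y : ℝ)}, setOf_lt_mem_cozeroFam continuous_const
    (continuous_subtype_val.comp hg), by simp [hgx], eq_univ_of_forall fun y => ?_⟩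
  by_cases hy : y ∈ U
  · exact Or.inl hy
  · exact Or.inr (by simp [hg1 hy])

end Cozero

section Frink

variable {X : Type*} [TopologicalSpace X] {B : Set (Set X)}

/-- The invariant `P` of `Urysohns.CU` under which the halving construction stays inside `B`. -/
def BasicPairBetween (B : Set (Set X)) (C W : Set X) : Prop :=
  ∃ a ∈ B, ∃ b ∈ B, a ∪ b = univ ∧ C ⊆ aᶜ ∧ b ⊆ W

theorem BasicPairBetween.exists_between (hBo : ∀ s ∈ B, IsOpen s)
    (hB : ∀ U ∈ B, ∀ V ∈ B, U ∪ V = univ → ∃ M ∈ B, ∃ N ∈ B, M ∩ N = ∅ ∧ Uᶜ ⊆ M ∧ Vᶜ ⊆ N)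
    {C W : Set X} (h : BasicPairBetween B C W) :
    ∃ v, IsOpen v ∧ C ⊆ v ∧ closure v ⊆ W ∧
      BasicPairBetween B C v ∧ BasicPairBetween B (closure v) W := by
  obtain ⟨a, ha, b, hb, hab, hCa, hbW⟩ := h
  obtain ⟨M, hM, N, hN, hMN, haM, hbN⟩ := hB a ha b hb hab
  have hMN' : closure M ⊆ Nᶜ :=
    closure_minimal (subset_compl_iff_disjoint_right.2 (disjoint_iff_inter_eq_empty.2 hMN))
      (hBo N hN).isClosed_compl
  exact ⟨M, hBo M hM, hCa.trans haM, hMN'.trans ((compl_subset_comm.1 hbN).trans hbW),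
    ⟨a, ha, M, hM, compl_subset_iff_union.1 haM, hCa, subset_rfl⟩,
    ⟨N, hN, b, hb, union_comm N b ▸ compl_subset_iff_union.1 hbN, hMN', hbW⟩⟩

theorem exists_continuous_eqOn_zero_one_of_union_eq_univ (hBo : ∀ s ∈ B, IsOpen s)
    (hB : ∀ U ∈ B, ∀ V ∈ B, U ∪ V = univ → ∃ M ∈ B, ∃ N ∈ B, M ∩ N = ∅ ∧ Uᶜ ⊆ M ∧ Vᶜ ⊆ N)
    {U V : Set X} (hU : U ∈ B) (hV : V ∈ B) (hUV : U ∪ V = univ) :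
    ∃ f : C(X, I), EqOn f 0 Uᶜ ∧ EqOn f 1 Vᶜ := by
  let c : Urysohns.CU (BasicPairBetween B) :=
    { C := Uᶜ
      U := V
      P_C_U := ⟨U, hU, V, hV, hUV, subset_rfl, subset_rfl⟩
      closed_C := (hBo U hU).isClosed_compl
      open_U := hBo V hV
      subset := compl_subset_iff_union.2 hUV
      hP := fun _ h _ _ => h.exists_between hBo hB }
  refine ⟨⟨fun x => ⟨c.lim x, c.lim_mem_Icc x⟩, c.continuous_lim.subtype_mk _⟩,
    fun x hx => Subtype.ext (c.lim_of_mem_C x hx),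
    fun x hx => Subtype.ext (c.lim_of_notMem_U x hx)⟩

theorem completelyRegularSpace_of_isTopologicalBasis (hBasis : IsTopologicalBasis B)
    (hB₁ : ∀ U ∈ B, ∀ x ∈ U, ∃ V ∈ B, x ∉ V ∧ U ∪ V = univ)
    (hB₂ : ∀ U ∈ B, ∀ V ∈ B, U ∪ V = univ → ∃ M ∈ B, ∃ N ∈ B, M ∩ N = ∅ ∧ Uᶜ ⊆ M ∧ Vᶜ ⊆ N) :
    CompletelyRegularSpace X := by
  refine completelyRegularSpace_iff_isOpen.2 fun x W hW hxW => ?_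
  obtain ⟨U, hU, hxU, hUW⟩ := hBasis.exists_subset_of_mem_open hxW hW
  obtain ⟨V, hV, hxV, hUV⟩ := hB₁ U hU x hxU
  obtain ⟨f, hf0, hf1⟩ := exists_continuous_eqOn_zero_one_of_union_eq_univ
    (fun _ => hBasis.isOpen) hB₂ hV hU (union_comm U V ▸ hUV)
  exact ⟨f, f.continuous, hf0 hxV, hf1.mono (compl_subset_compl.2 hUW)⟩

end Frink

theorem stmt7_general {X : Type*} [TopologicalSpace X] :
    CompletelyRegularSpace X ↔
      ∃ B : Set (Set X), TopologicalSpace.IsTopologicalBasis B ∧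
        (∀ U ∈ B, ∀ x ∈ U, ∃ V ∈ B, x ∉ V ∧ U ∪ V = Set.univ) ∧
        (∀ U ∈ B, ∀ V ∈ B, U ∪ V = Set.univ →
          ∃ M ∈ B, ∃ N ∈ B, M ∩ N = ∅ ∧ Uᶜ ⊆ M ∧ Vᶜ ⊆ N) :=
  ⟨fun _ => ⟨cozeroFam X, isTopologicalBasis_cozeroFam,
      fun _ hU _ hx => exists_cozeroFam_notMem_union_eq_univ (isOpen_of_mem_cozeroFam hU) hx,
      fun _ hU _ hV => exists_disjoint_cozeroFam_of_union_eq_univ hU hV⟩,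
    fun ⟨_, hBasis, hB₁, hB₂⟩ => completelyRegularSpace_of_isTopologicalBasis hBasis hB₁ hB₂⟩

theorem stmt7 {X : Type*} [TopologicalSpace X] [T1Space X] :
    CompletelyRegularSpace X ↔
      ∃ B : Set (Set X), TopologicalSpace.IsTopologicalBasis B ∧
        (∀ U ∈ B, ∀ x ∈ U, ∃ V ∈ B, x ∉ V ∧ U ∪ V = Set.univ) ∧
        (∀ U ∈ B, ∀ V ∈ B, U ∪ V = Set.univ →
          ∃ M ∈ B, ∃ N ∈ B, M ∩ N = ∅ ∧ Uᶜ ⊆ M ∧ Vᶜ ⊆ N) :=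
  stmt7_general
end

section
/- If P ⊆ P_seq is a countable family of subsets of X closed under finite intersections, then X/P with the Q_P-topology is metrizable and separable. -/
open Set Topology

theorem stmt9 {X : Type*} (P : Set (Set X)) (hcount : P.Countable)
    (hinter : ∀ U ∈ P, ∀ V ∈ P, U ∩ V ∈ P) (hseq : P ⊆ seqFam P) :
    @TopologicalSpace.MetrizableSpace (pQuot P) (pTop P) ∧
      @TopologicalSpace.SeparableSpace (pQuot P) (pTop P) := by
  letI : TopologicalSpace (pQuot P) := pTop P
  set g : Set (Set (pQuot P)) := {S | ∃ V ∈ P, S = pMap P '' V} with hg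
  have hgen : (pTop P) = TopologicalSpace.generateFrom g := rfl
  -- membership characterization
  have hmem : ∀ V ∈ P, ∀ x : X, pMap P x ∈ pMap P '' V ↔ x ∈ V := by
    intro V hV x
    constructor
    · rintro ⟨z, hz, he⟩
      exact (Quotient.exact he V hV).mp hz
    · exact fun h => Set.mem_image_of_mem _ h
  have hsurj : Function.Surjective (pMap P) := fun a => Quotient.exists_rep a
  -- g is countable
  have hgc : g.Countable := by
    have : g = (fun V => pMap P '' V) '' P := by
      ext S; simp [hg, eq_comm]
    rw [this]; exact hcount.image _
  -- g is closed under intersections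
  have hgi : ∀ ⦃s⦄, s ∈ g → ∀ ⦃t⦄, t ∈ g → s ∩ t ∈ g := by
    rintro _ ⟨U, hU, rfl⟩ _ ⟨V, hV, rfl⟩
    refine ⟨U ∩ V, hinter U hU V hV, ?_⟩
    ext a
    obtain ⟨x, rfl⟩ := hsurj a
    simp only [Set.mem_inter_iff, hmem U hU, hmem V hV, hmem _ (hinter U hU V hV)]
  have hbasis := TopologicalSpace.isTopologicalBasis_of_subbasis_of_inter hgen hgi
  have hsc : @SecondCountableTopology (pQuot P) (pTop P) :=
    hbasis.secondCountableTopology (hgc.insert _)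
  -- Regularity
  have hreg : RegularSpace (pQuot P) := by
    apply RegularSpace.of_exists_mem_nhds_isClosed_subset
    intro a s hs
    obtain ⟨t, ht, hat, hts⟩ := hbasis.mem_nhds_iff.mp hs
    rcases ht with rfl | ⟨W, hW, rfl⟩
    · exact ⟨Set.univ, Filter.univ_mem, isClosed_univ, hts⟩
    · obtain ⟨U, V, hU, hV, hch, hUW⟩ := hseq hW
      obtain ⟨x, rfl⟩ := hsurj a
      have hxW : x ∈ W := (hmem W hW x).mp hat
      rw [← hUW] at hxW
      obtain ⟨n, hxn⟩ := Set.mem_iUnion.mp hxW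
      refine ⟨(pMap P '' V n)ᶜ, ?_, ?_, ?_⟩
      · -- neighborhood: contains open pMap '' U n
        have hop : IsOpen (pMap P '' U n) :=
          TopologicalSpace.isOpen_generateFrom_of_mem ⟨U n, hU n, rfl⟩
        refine Filter.mem_of_superset (hop.mem_nhds ((hmem _ (hU n) x).mpr hxn)) ?_
        rintro b hb
        obtain ⟨z, rfl⟩ := hsurj b
        intro hzV
        exact (hch n).1 ((hmem _ (hU n) z).mp hb) ((hmem _ (hV n) z).mp hzV)
      · exact (TopologicalSpace.isOpen_generateFrom_of_mem
          (show pMap P '' V n ∈ g from ⟨V n, hV n, rfl⟩)).isClosed_compl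
      · -- ⊆ pMap '' W ⊆ s
        refine subset_trans ?_ hts
        intro b hb
        obtain ⟨z, rfl⟩ := hsurj b
        have hz : z ∈ U (n + 1) := (hch n).2 (fun hzV => hb ((hmem _ (hV n) z).mpr hzV))
        exact (hmem W hW z).mpr (hUW ▸ Set.mem_iUnion.mpr ⟨n + 1, hz⟩)
  have ht0 : T0Space (pQuot P) := by
    refine t0Space_iff_inseparable (pQuot P) |>.mpr ?_
    intro a b hab
    obtain ⟨x, rfl⟩ := hsurj a
    obtain ⟨y, rfl⟩ := hsurj b
    refine Quotient.sound fun V hV => ?_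
    have hop : IsOpen (pMap P '' V) :=
      TopologicalSpace.isOpen_generateFrom_of_mem ⟨V, hV, rfl⟩
    rw [← hmem V hV x, ← hmem V hV y]
    exact ⟨fun h => (hab.mem_open_iff hop).mp h, fun h => (hab.mem_open_iff hop).mpr h⟩
  haveI : T3Space (pQuot P) := { toT0Space := ht0, toRegularSpace := hreg }
  haveI := hsc
  exact ⟨TopologicalSpace.metrizableSpace_of_t3_secondCountable (pQuot P),
    TopologicalSpace.SecondCountableTopology.to_separableSpace⟩
end

section
/- Let f : X → Y be a continuous surjection and B a π-base for Y. Then the family {f⁻¹(V) : V ∈ B} is a skeletal family in X if and only if f is a skeletal map. -/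
open Set Topology

theorem stmt12 {X Y : Type*} [TopologicalSpace X] [TopologicalSpace Y]
    (f : X → Y) (hcont : Continuous f) (hsurj : Function.Surjective f)
    (B : Set (Set Y)) (hB : IsPiBase B) :
    SkeletalFamily {W : Set X | ∃ V ∈ B, W = f ⁻¹' V} ↔ IsSkeletal f := by
  constructor
  · intro hsk
    refine ⟨hcont, hsurj, fun U hU hUne => ?_⟩
    obtain ⟨W, ⟨V₀, hV₀B, rfl⟩, hW⟩ := hsk U hU hUne
    have hsub : V₀ ⊆ closure (f '' U) := by
      intro y hy
      rw [mem_closure_iff]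
      intro O hO hyO
      obtain ⟨b, hbB, hbsub⟩ := hB.2 (O ∩ V₀) (hO.inter (hB.1 V₀ hV₀B).1) ⟨y, hyO, hy⟩
      have hne : (f ⁻¹' b).Nonempty := by
        obtain ⟨z, hz⟩ := (hB.1 b hbB).2
        obtain ⟨x, rfl⟩ := hsurj z
        exact ⟨x, hz⟩
      obtain ⟨x, hxb, hxU⟩ := hW (f ⁻¹' b) ⟨b, hbB, rfl⟩
        (fun x hx => (hbsub hx).2) hne
      exact ⟨f x, (hbsub hxb).1, x, hxU, rfl⟩
    obtain ⟨y, hy⟩ := (hB.1 V₀ hV₀B).2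
    exact ⟨y, mem_interior_iff_mem_nhds.2 <| Filter.mem_of_superset
      ((hB.1 V₀ hV₀B).1.mem_nhds hy) hsub⟩
  · rintro ⟨-, -, hsk⟩ V hV hVne
    obtain ⟨b, hbB, hbsub⟩ := hB.2 _ isOpen_interior (hsk V hV hVne)
    refine ⟨f ⁻¹' b, ⟨b, hbB, rfl⟩, ?_⟩
    rintro U ⟨b', hb'B, rfl⟩ hsub hne
    have hb'b : b' ⊆ b := by
      intro y hy
      obtain ⟨x, rfl⟩ := hsurj y
      exact hsub hy
    have hb'cl : b' ⊆ closure (f '' V) :=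
      fun y hy => interior_subset (hbsub (hb'b hy))
    obtain ⟨y, hy⟩ := (hB.1 b' hb'B).2
    have := mem_closure_iff.1 (hb'cl hy) b' (hB.1 b' hb'B).1 hy
    obtain ⟨z, hz1, x, hxV, rfl⟩ := this
    exact ⟨x, hz1, hxV⟩
end

section
/- Let {X_σ, π^σ_ρ, Σ} be an inverse system of topological spaces over a directed set Σ in which all bonding maps π^σ_ρ are skeletal and all limit projections π_σ from the inverse limit onto X_σ are surjective. Then every projection π_σ is a skeletal map. -/
open Set Topology

theorem stmt13 {ι : Type*} [Preorder ι] [IsDirected ι (· ≤ ·)]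
    (Y : ι → Type*) [∀ i, TopologicalSpace (Y i)]
    (bond : ∀ i j : ι, i ≤ j → Y j → Y i)
    (bond_refl : ∀ i (x : Y i), bond i i le_rfl x = x)
    (bond_comp : ∀ (i j k : ι) (hij : i ≤ j) (hjk : j ≤ k) (x : Y k),
      bond i j hij (bond j k hjk x) = bond i k (hij.trans hjk) x)
    (hskel : ∀ (i j : ι) (h : i ≤ j), IsSkeletal (bond i j h))
    (hproj : ∀ i, Function.Surjective (fun u : invLimit Y bond => u.1 i)) :
    ∀ i, IsSkeletal (fun u : invLimit Y bond => u.1 i) := by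
  intro i
  refine ⟨(continuous_apply i).comp continuous_subtype_val, hproj i, ?_⟩
  intro U hU hUne
  obtain ⟨u, hu⟩ := hUne
  obtain ⟨S, hS, rfl⟩ := isOpen_induced_iff.mp hU
  obtain ⟨I, V, hIV, hpi⟩ := isOpen_pi_iff.mp hS u.1 hu
  have : Nonempty ι := ⟨i⟩
  obtain ⟨j0, hj0⟩ := I.exists_le
  obtain ⟨j, hij, hj0j⟩ := directed_of (· ≤ ·) i j0
  have hkj : ∀ k ∈ I, k ≤ j := fun k hk => (hj0 k hk).trans hj0j
  set W : Set (Y j) := ⋂ k : I, bond k j (hkj k k.2) ⁻¹' V k with hW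
  have hWopen : IsOpen W := isOpen_iInter_of_finite fun k =>
    (hskel k j (hkj k k.2)).1.isOpen_preimage _ (hIV k k.2).1
  have hWne : W.Nonempty := by
    refine ⟨u.1 j, Set.mem_iInter.mpr fun k => ?_⟩
    show bond k j (hkj k k.2) (u.1 j) ∈ V k
    rw [u.2 k j (hkj k k.2)]
    exact (hIV k k.2).2
  have hsub : bond i j hij '' W ⊆ (fun u : invLimit Y bond => u.1 i) '' (Subtype.val ⁻¹' S) := by
    rintro _ ⟨y, hy, rfl⟩
    obtain ⟨v, hv⟩ := hproj j y
    have hvj : v.1 j = y := hv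
    refine ⟨v, hpi fun k hk => ?_, ?_⟩
    · have h1 : bond k j (hkj k hk) (v.1 j) = v.1 k := v.2 k j (hkj k hk)
      have h2 : y ∈ bond k j (hkj k hk) ⁻¹' V k := Set.mem_iInter.mp hy ⟨k, hk⟩
      rw [← h1, hvj]; exact h2
    · show v.1 i = bond i j hij y
      rw [← hvj, v.2 i j hij]
  obtain ⟨z, hz⟩ := (hskel i j hij).2.2 W hWopen hWne
  exact ⟨z, interior_mono (closure_mono hsub) hz⟩
end

section
/- If P is a family of nonempty open subsets of a topological space X closed under a winning strategy σ for Player I in the open-open game on X, then for every nonempty open set V ⊆ X there exists W ∈ P such that every U ∈ P with U ⊆ W satisfies U ∩ V ≠ ∅. -/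
open Set Topology

/-- Auxiliary: the play of Player II choosing `g (σ (previous moves))` at each step. -/
def playB {X : Type*} (g : Set X → Set X) (σ : List (Set X) → Set X) : ℕ → Set X
  | n => g (σ (List.ofFn fun i : Fin n => playB g σ i))
  decreasing_by exact i.2

theorem stmt14 {X : Type*} [TopologicalSpace X] (P : Set (Set X))
    (hP : ∀ A ∈ P, IsOpen A ∧ A.Nonempty)
    (σ : List (Set X) → Set X) (hwin : WinningStrategy σ)
    (hclosed : ClosedUnderStrategy P σ) :
    ∀ V : Set X, IsOpen V → V.Nonempty →
      ∃ W ∈ P, ∀ U ∈ P, U ⊆ W → (U ∩ V).Nonempty := by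
  intro V hV hVne
  by_contra hcon
  push_neg at hcon
  choose! g hg1 hg2 hg3 using hcon
  set B := playB g σ with hB
  have hBeq : ∀ n, B n = g (σ (List.ofFn fun i : Fin n => B i)) := by
    intro n; rw [hB]; rw [playB]
  -- every B n is in P
  have hBP : ∀ n, B n ∈ P := by
    intro n
    induction n using Nat.strong_induction_on with
    | _ n ih =>
      have hσP : σ (List.ofFn fun i : Fin n => B i) ∈ P := by
        apply hclosed.2
        intro b hb
        rw [List.mem_ofFn] at hb
        obtain ⟨i, rfl⟩ := hb
        exact ih i i.2
      rw [hBeq n]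
      exact hg1 _ hσP
  have hplay : IsPlayAgainst σ B := by
    intro n
    have hσP : σ (List.ofFn fun i : Fin n => B i) ∈ P := by
      apply hclosed.2
      intro b hb
      rw [List.mem_ofFn] at hb
      obtain ⟨i, rfl⟩ := hb
      exact hBP i
    refine ⟨(hP _ (hBP n)).1, (hP _ (hBP n)).2, ?_⟩
    rw [hBeq n]
    exact hg2 _ hσP
  have hdense := hwin.2 B hplay
  obtain ⟨x, hx1, hx2⟩ := hdense.inter_open_nonempty V hV hVne
  obtain ⟨n, hn⟩ := Set.mem_iUnion.mp hx2
  have hσP : σ (List.ofFn fun i : Fin n => B i) ∈ P := by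
    apply hclosed.2
    intro b hb
    rw [List.mem_ofFn] at hb
    obtain ⟨i, rfl⟩ := hb
    exact hBP i
  have : x ∈ B n ∩ V := ⟨hn, hx1⟩
  rw [hBeq n, hg3 _ hσP] at this
  exact this
end

section
/- Let X be a completely regular I-favorable space and C a T-club (with T the family of cozero sets of X). Then X embeds as a dense subspace of the inverse limit of the system {X/R, q^R_P, C}, where for P ⊆ R in C the bonding map q^R_P sends [x]_R to [x]_P. -/
open Set Topology

lemma cozero_isOpen {X : Type*} [TopologicalSpace X] {W : Set X} (hW : W ∈ cozeroFam X) :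
    IsOpen W := by
  obtain ⟨f, hf, hrange, rfl⟩ := hW
  have h : f ⁻¹' Set.Ioc 0 1 = f ⁻¹' Set.Ioi 0 := by
    ext x
    simp only [Set.mem_preimage, Set.mem_Ioc, Set.mem_Ioi]
    exact ⟨fun h => h.1, fun h => ⟨h, (hrange x).2⟩⟩
  rw [h]
  exact isOpen_Ioi.preimage hf

lemma exists_cozero_between {X : Type*} [TopologicalSpace X] [CompletelyRegularSpace X]
    {U : Set X} (hU : IsOpen U) {x : X} (hx : x ∈ U) :
    ∃ V ∈ cozeroFam X, x ∈ V ∧ V ⊆ U := by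
  obtain ⟨f, hf, hfx, hfK⟩ :=
    CompletelyRegularSpace.completely_regular x Uᶜ hU.isClosed_compl (by simpa)
  set g : X → ℝ := fun z => 1 - (f z : ℝ) with hg
  have hgc : Continuous g := continuous_const.sub (continuous_subtype_val.comp hf)
  refine ⟨g ⁻¹' Set.Ioc 0 1, ⟨g, hgc, fun z => ?_, rfl⟩, ?_, ?_⟩
  · have h2 := (f z).2
    simp only [Set.mem_Icc] at h2 ⊢
    constructor
    · show (0:ℝ) ≤ 1 - (f z : ℝ)
      linarith [h2.2]
    · show (1:ℝ) - (f z : ℝ) ≤ 1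
      linarith [h2.1]
  · show g x ∈ Set.Ioc 0 1
    simp [hg, hfx]
  · intro z hz
    by_contra hzU
    have h1 : f z = 1 := hfK hzU
    have : g z = 0 := by simp [hg, h1]
    simp only [Set.mem_preimage, Set.mem_Ioc, this] at hz
    exact lt_irrefl 0 hz.1

lemma pMap_preimage_image {X : Type*} {P : Set (Set X)} {V : Set X} (hV : V ∈ P) :
    pMap P ⁻¹' (pMap P '' V) = V := by
  apply Set.Subset.antisymm
  · intro x hx
    obtain ⟨y, hy, hxy⟩ := hx
    exact (Quotient.exact hxy V hV).mp hy
  · exact Set.subset_preimage_image _ _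

lemma pMap_continuous {X : Type*} [TopologicalSpace X] {P : Set (Set X)}
    (hP : P ⊆ cozeroFam X) :
    Continuous[_, pTop P] (pMap P) := by
  apply continuous_generateFrom_iff.mpr
  rintro S ⟨V, hV, rfl⟩
  rw [pMap_preimage_image hV]
  exact cozero_isOpen (hP hV)

theorem stmt19 {X : Type*} [TopologicalSpace X] [T1Space X] [CompletelyRegularSpace X]
    (hfav : IFavorable X) (C : Set (Set (Set X))) (hC : TClub C) :
    ∃ e : X → invLimit (fun P : {P : Set (Set X) // P ∈ C} => pQuot P.1)
        (fun (i j : {P : Set (Set X) // P ∈ C}) (h : i ≤ j) => pBond i.1 j.1 h),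
      (∀ x, (e x).1 = fun P : {P : Set (Set X) // P ∈ C} => pMap P.1 x) ∧
      @IsEmbedding X _ _
        (invLimitTop (fun P : {P : Set (Set X) // P ∈ C} => pQuot P.1)
          (fun P : {P : Set (Set X) // P ∈ C} => pTop P.1)
          (fun (i j : {P : Set (Set X) // P ∈ C}) (h : i ≤ j) => pBond i.1 j.1 h)) e ∧
      @DenseRange _
        (invLimitTop (fun P : {P : Set (Set X) // P ∈ C} => pQuot P.1)
          (fun P : {P : Set (Set X) // P ∈ C} => pTop P.1)
          (fun (i j : {P : Set (Set X) // P ∈ C}) (h : i ≤ j) => pBond i.1 j.1 h)) _ e := by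
  classical
  obtain ⟨σ, hσ, hmem, hcof, hchain⟩ := hC
  set ι := {P : Set (Set X) // P ∈ C} with hι
  letI tP : ∀ P : ι, TopologicalSpace (pQuot P.1) := fun P => pTop P.1
  set e : X → invLimit (fun P : ι => pQuot P.1)
      (fun (i j : ι) (h : i ≤ j) => pBond i.1 j.1 h) :=
    fun x => ⟨fun P => pMap P.1 x, fun i j h => rfl⟩ with he
  refine ⟨e, fun x => rfl, ?_, ?_⟩
  · -- embedding
    show IsEmbedding e
    refine ⟨⟨?_⟩, ?_⟩
    · -- eq_induced
      refine le_antisymm ?_ ?_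
      · -- inst ≤ induced e
        refine continuous_iff_le_induced.mp ?_
        refine Continuous.subtype_mk ?_ _
        exact continuous_pi fun P => pMap_continuous (hmem P.1 P.2).2.1
      · -- induced ≤ inst
        rw [TopologicalSpace.le_def]
        intro U hU
        have hsel : ∀ x ∈ U, ∃ (P : ι) (V : Set X), V ∈ P.1 ∧ x ∈ V ∧ V ⊆ U := by
          intro x hx
          obtain ⟨V, hVc, hxV, hVU⟩ := exists_cozero_between hU hx
          obtain ⟨P, hP, hVP⟩ := hcof {V} (Set.countable_singleton V) (by simpa)
          exact ⟨⟨P, hP⟩, V, hVP rfl, hxV, hVU⟩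
        obtain ⟨P₀, hP₀, -⟩ := hcof ∅ Set.countable_empty (Set.empty_subset _)
        haveI : Nonempty ι := ⟨⟨P₀, hP₀⟩⟩
        choose! Pf Vf hVmem hxV hVU using hsel
        refine isOpen_induced_iff.mpr
          ⟨⋃ x ∈ U, {u : invLimit (fun P : ι => pQuot P.1)
            (fun (i j : ι) (h : i ≤ j) => pBond i.1 j.1 h) |
              u.1 (Pf x) ∈ pMap (Pf x).1 '' (Vf x)}, ?_, ?_⟩
        · refine isOpen_biUnion fun x hx => ?_
          have hcont : Continuous fun u : invLimit (fun P : ι => pQuot P.1)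
              (fun (i j : ι) (h : i ≤ j) => pBond i.1 j.1 h) => u.1 (Pf x) :=
            (continuous_apply (Pf x)).comp continuous_subtype_val
          exact hcont.isOpen_preimage _
            (TopologicalSpace.isOpen_generateFrom_of_mem ⟨Vf x, hVmem x hx, rfl⟩)
        · ext z
          simp only [Set.mem_preimage, Set.mem_iUnion, Set.mem_setOf_eq]
          constructor
          · rintro ⟨x, hxU, hz⟩
            refine hVU x hxU ?_
            have : z ∈ pMap (Pf x).1 ⁻¹' (pMap (Pf x).1 '' (Vf x)) := hz
            rwa [pMap_preimage_image (hVmem x hxU)] at this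
          · intro hzU
            exact ⟨z, hzU, Set.mem_image_of_mem _ (hxV z hzU)⟩
    · -- injective
      intro x y hxy
      by_contra hne
      have hyo : x ∈ ({y}ᶜ : Set X) := by simpa
      obtain ⟨V, hVc, hxV, hVU⟩ :=
        exists_cozero_between isClosed_singleton.isOpen_compl hyo
      obtain ⟨P, hP, hVP⟩ := hcof {V} (Set.countable_singleton V) (by simpa)
      have hq : pMap P x = pMap P y :=
        congrFun (congrArg Subtype.val hxy) ⟨P, hP⟩
      have hy : y ∈ V := (Quotient.exact hq V (hVP rfl)).mp hxV
      exact hVU hy rfl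
  · -- dense range
    show DenseRange e
    refine dense_iff_inter_open.mpr ?_
    rintro O hO ⟨u, huO⟩
    obtain ⟨O', hO', rfl⟩ := isOpen_induced_iff.mp hO
    have hu1 : u.1 ∈ O' := huO
    obtain ⟨I, w, hw, hpi⟩ := isOpen_pi_iff.mp hO' u.1 hu1
    have hQc : (⋃ i ∈ I, (i : ι).1).Countable :=
      Set.Countable.biUnion I.countable_toSet (fun i _ => (hmem i.1 i.2).1)
    have hQT : (⋃ i ∈ I, (i : ι).1) ⊆ cozeroFam X :=
      Set.iUnion₂_subset fun i _ => (hmem i.1 i.2).2.1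
    obtain ⟨S, hS, hQS⟩ := hcof _ hQc hQT
    obtain ⟨x, hx⟩ := Quot.exists_rep (u.1 ⟨S, hS⟩)
    refine ⟨e x, ?_, Set.mem_range_self x⟩
    show (e x).1 ∈ O'
    refine hpi ?_
    refine Set.mem_pi.mpr fun i hi => ?_
    have hle : i ≤ (⟨S, hS⟩ : ι) :=
      fun V hV => hQS (Set.mem_biUnion hi hV)
    have h3 : pMap i.1 x = u.1 i := by
      rw [← u.2 i ⟨S, hS⟩ hle, ← hx]
      rfl
    show pMap i.1 x ∈ w i
    rw [h3]
    exact (hw i hi).2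
end
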